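/- arXiv:1003.5458 — 4 statements merged into one kernel-verified Lean document; each statement's English description precedes it below -/
import Mathlib

section
/- Let G be a connected (P5, complement-of-P5)-free graph containing an induced C5. Then every induced C5 of G is contained in a buoy, and this buoy is either the whole vertex set of G or a homogeneous set of G. -/
namespace SimpleGraph

variable {V W : Type*}

/-- Seidel complement of `G` at vertex `v`. -/
def seidel (G : SimpleGraph V) (v : V) : SimpleGraph V where
  Adj x y := Xor' (G.Adj x y)
    ((G.Adj v x ∧ ¬ G.Adj v y ∧ y ≠ v) ∨ (G.Adj v y ∧ ¬ G.Adj v x ∧ x ≠ v))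
  symm := by
    constructor
    intro x y h
    unfold Xor' at h ⊢
    unfold Xor at h ⊢
    have hc := G.adj_comm x y
    tauto
  loopless := by
    constructor
    intro x h
    unfold Xor' at h
    unfold Xor at h
    simp only [G.irrefl] at h
    tauto

/-- A module (homogeneous set in the weak sense) of a graph. -/
def IsModule (G : SimpleGraph V) (M : Set V) : Prop :=
  ∀ x ∉ M, (∀ y ∈ M, G.Adj x y) ∨ (∀ y ∈ M, ¬ G.Adj x y)

/-- A graph is prime w.r.t. modular decomposition. -/
def IsPrime (G : SimpleGraph V) [Fintype V] : Prop :=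
  3 ≤ Fintype.card V ∧
    ∀ M : Set V, G.IsModule M → M = ∅ ∨ (∃ x, M = {x}) ∨ M = Set.univ

/-- `G` has no induced subgraph isomorphic to `H`. -/
def IndFree (G : SimpleGraph V) (H : SimpleGraph W) : Prop :=
  IsEmpty (H ↪g G)

/-- The bull: triangle 0,1,2 with pendant vertices 3 (at 0) and 4 (at 1). -/
def bull : SimpleGraph (Fin 5) :=
  SimpleGraph.fromRel (fun x y =>
    (x, y) ∈ [((0 : Fin 5), (1 : Fin 5)), (1, 2), (0, 2), (0, 3), (1, 4)])

/-- The house: complement of the path on 5 vertices. -/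
def house : SimpleGraph (Fin 5) := (pathGraph 5)ᶜ

/-- `G` is (P5, House, Bull)-free. -/
def PHBFree (G : SimpleGraph V) : Prop :=
  G.IndFree (pathGraph 5) ∧ G.IndFree house ∧ G.IndFree bull

/-- The half graph: `b i` adjacent to `w j` iff `i + j ≤ m + 1` (1-based). -/
def halfGraph (m : ℕ) : SimpleGraph (Fin m ⊕ Fin m) :=
  SimpleGraph.fromRel (fun x y =>
    match x, y with
    | Sum.inl i, Sum.inr j => i.val + j.val < m
    | _, _ => False)

/-- A buoy partition of a set of vertices. -/
def IsBuoy (G : SimpleGraph V) (A : Fin 5 → Set V) : Prop :=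
  (∀ i, (A i).Nonempty) ∧
  (∀ i j, i ≠ j → Disjoint (A i) (A j)) ∧
  (∀ i, ∀ x ∈ A i, ∀ y ∈ A (i + 1), G.Adj x y) ∧
  (∀ i j, i ≠ j → j ≠ i + 1 → i ≠ j + 1 → ∀ x ∈ A i, ∀ y ∈ A j, ¬ G.Adj x y) ∧
  (∀ B : Fin 5 → Set V,
    ((∀ i j, i ≠ j → Disjoint (B i) (B j)) ∧
     (∀ i, ∀ x ∈ B i, ∀ y ∈ B (i + 1), G.Adj x y) ∧
     (∀ i j, i ≠ j → j ≠ i + 1 → i ≠ j + 1 → ∀ x ∈ B i, ∀ y ∈ B j, ¬ G.Adj x y) ∧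
     (∀ i, A i ⊆ B i)) → B = A)

end SimpleGraph

/-!
Grow the five singletons of the given induced `C₅` to a maximal partition `B₀, …, B₄` whose
parts are pairwise joined or anticomplete as in `C₅`; that is a buoy. For a vertex `v` outside
it, choosing one vertex in each part gives an induced `C₅` with `v` attached. If `v` has a
neighbour in `Bₖ` and non-neighbours in `Bₖ₊₁, Bₖ₊₂, Bₖ₊₃`, these give an induced `P₅`;
neighbours in `Bₖ, Bₖ₊₁, Bₖ₊₃` and a non-neighbour in `Bₖ₊₂` give a house. A finite check over
the possible patterns then shows that `v` is complete or anticomplete to the buoy, or complete to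
`Bₖ₊₁ ∪ Bₖ₊₄` and anticomplete to `Bₖ₊₂ ∪ Bₖ₊₃`; in the last case `v` could be added to `Bₖ`,
contradicting maximality.
-/

namespace SimpleGraph

variable {V W ι : Type*} {G : SimpleGraph V}

theorem nonempty_embedding_of_adj_iff {H : SimpleGraph W}
    (hH : ∀ i j, i ≠ j → H.Adj i j ∨ ∃ l, ¬(H.Adj i l ↔ H.Adj j l))
    (f : W → V) (hf : ∀ i j, G.Adj (f i) (f j) ↔ H.Adj i j) : Nonempty (H ↪g G) := by
  refine ⟨⟨⟨f, fun i j hfij => ?_⟩, fun {i j} => hf i j⟩⟩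
  by_contra hij
  rcases hH i j hij with hadj | ⟨l, hl⟩
  · exact G.irrefl (hfij ▸ (hf i j).2 hadj)
  · exact hl ((hf i l).symm.trans (hfij ▸ hf j l))

/-- Unlike in a blow-up, parts may contain edges. A buoy is a maximal such partition for
`cycleGraph 5` with nonempty parts (`IsBlowupPartition.isBuoy_of_maximal`). -/
structure IsBlowupPartition (G : SimpleGraph V) (H : SimpleGraph ι) (B : ι → Set V) : Prop where
  pairwise_disjoint : Pairwise fun i j => Disjoint (B i) (B j)
  adj_iff : ∀ ⦃i j⦄, i ≠ j → ∀ ⦃x⦄, x ∈ B i → ∀ ⦃y⦄, y ∈ B j → (G.Adj x y ↔ H.Adj i j)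

namespace IsBlowupPartition

variable {H : SimpleGraph ι} {B : ι → Set V}

theorem of_embedding (f : H ↪g G) : IsBlowupPartition G H fun i => {f i} where
  pairwise_disjoint _ _ hij := Set.disjoint_singleton.2 (f.injective.ne hij)
  adj_iff _ _ _ x hx y hy := by rw [hx, hy]; exact f.map_adj_iff

def toEmbedding (hB : IsBlowupPartition G H B) (x : ι → V) (hx : ∀ i, x i ∈ B i) : H ↪g G where
  toFun := x
  inj' i j hxij := by
    by_contra hij
    exact Set.disjoint_left.1 (hB.pairwise_disjoint hij) (hx i) (hxij ▸ hx j)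
  map_rel_iff' {i j} := by
    rcases eq_or_ne i j with rfl | hij
    · simp
    · exact hB.adj_iff hij (hx i) (hx j)

theorem update_insert [DecidableEq ι] (hB : IsBlowupPartition G H B) {v : V}
    (hv : ∀ i, v ∉ B i) {k : ι} (hvadj : ∀ j, j ≠ k → ∀ y ∈ B j, (G.Adj v y ↔ H.Adj k j)) :
    IsBlowupPartition G H (Function.update B k (insert v (B k))) := by
  have mem {i x} : x ∈ Function.update B k (insert v (B k)) i ↔ (i = k ∧ x = v) ∨ x ∈ B i := by
    rcases eq_or_ne i k with rfl | hik <;> simp [*]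
  constructor
  · intro i j hij
    refine Set.disjoint_left.2 fun x hx hx' => ?_
    rcases mem.1 hx with ⟨rfl, rfl⟩ | hxi
    · rcases mem.1 hx' with ⟨rfl, -⟩ | hxj
      · exact hij rfl
      · exact hv j hxj
    rcases mem.1 hx' with ⟨rfl, rfl⟩ | hxj
    · exact hv i hxi
    · exact Set.disjoint_left.1 (hB.pairwise_disjoint hij) hxi hxj
  · intro i j hij x hx y hy
    rcases mem.1 hx with ⟨rfl, rfl⟩ | hxi <;> rcases mem.1 hy with ⟨rfl, rfl⟩ | hyj
    · exact absurd rfl hij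
    · exact hvadj j hij.symm y hyj
    · rw [G.adj_comm, H.adj_comm]; exact hvadj i hij x hxi
    · exact hB.adj_iff hij hxi hyj

theorem mem_iUnion_of_maximal [DecidableEq ι] (hB : Maximal (IsBlowupPartition G H) B)
    {v : V} {k : ι} (hvadj : ∀ j, j ≠ k → ∀ y ∈ B j, (G.Adj v y ↔ H.Adj k j)) :
    v ∈ ⋃ i, B i := by
  by_contra hv
  simp only [Set.mem_iUnion, not_exists] at hv
  have hle : B ≤ Function.update B k (insert v (B k)) := fun i => by
    rcases eq_or_ne i k with rfl | hik <;> simp [*, Set.subset_insert]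
  have heq := congrFun (hB.eq_of_ge (hB.prop.update_insert hv hvadj) hle) k
  simp only [Function.update_self] at heq
  exact hv k (heq ▸ Set.mem_insert v (B k))

end IsBlowupPartition

theorem cycleGraph_five_adj_iff {i j : Fin 5} :
    (cycleGraph 5).Adj i j ↔ j = i + 1 ∨ i = j + 1 := by
  revert i j; decide

theorem cycleGraph_five_adj_add_iff {k m : Fin 5} :
    (cycleGraph 5).Adj k (k + m) ↔ m = 1 ∨ m = 4 := by
  revert k m; decide

theorem nonempty_pathGraph_embedding_of_cycle (r : cycleGraph 5 ↪g G) {v : V}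
    (h0 : G.Adj v (r 0)) (h1 : ¬ G.Adj v (r 1)) (h2 : ¬ G.Adj v (r 2)) (h3 : ¬ G.Adj v (r 3)) :
    Nonempty (pathGraph 5 ↪g G) := by
  refine nonempty_embedding_of_adj_iff (by simp only [pathGraph_adj]; decide)
    ![v, r 0, r 1, r 2, r 3] fun i j => ?_
  have hr (i j : Fin 5) : G.Adj (r i) (r j) ↔ (cycleGraph 5).Adj i j := r.map_adj_iff
  fin_cases i <;> fin_cases j <;>
    simp [pathGraph_adj, hr, cycleGraph_five_adj_iff, h0, h1, h2, h3, G.adj_comm _ v]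

theorem nonempty_house_embedding_of_cycle (r : cycleGraph 5 ↪g G) {v : V}
    (h0 : G.Adj v (r 0)) (h1 : G.Adj v (r 1)) (h2 : ¬ G.Adj v (r 2)) (h3 : G.Adj v (r 3)) :
    Nonempty ((pathGraph 5)ᶜ ↪g G) := by
  -- the square `v, r 1, r 2, r 3` with roof `r 0`, listed along the complementary path
  refine nonempty_embedding_of_adj_iff (by simp only [compl_adj, pathGraph_adj]; decide)
    ![r 1, r 3, r 0, r 2, v] fun i j => ?_
  have hr (i j : Fin 5) : G.Adj (r i) (r j) ↔ (cycleGraph 5).Adj i j := r.map_adj_iff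
  fin_cases i <;> fin_cases j <;>
    simp [pathGraph_adj, hr, cycleGraph_five_adj_iff, h0, h1, h2, h3, G.adj_comm _ v]

/-- `hit i` and `miss i` stand for "`v` has a neighbour, resp. a non-neighbour, in the `i`-th
part"; the last alternative makes `v` a possible member of part `k`. -/
theorem cycle_five_trace_cases (hit miss : Fin 5 → Prop) (hcover : ∀ i, hit i ∨ miss i)
    (hpath : ∀ k, ¬(hit k ∧ miss (k + 1) ∧ miss (k + 2) ∧ miss (k + 3)))
    (hhouse : ∀ k, ¬(hit k ∧ hit (k + 1) ∧ miss (k + 2) ∧ hit (k + 3))) :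
    (∀ i, ¬ hit i) ∨ (∀ i, ¬ miss i) ∨
      ∃ k, ¬ miss (k + 1) ∧ ¬ miss (k + 4) ∧ ¬ hit (k + 2) ∧ ¬ hit (k + 3) := by
  classical
  have key : ∀ c a : Fin 5 → Bool, (∀ i, (c i || a i) = true) →
      (∀ k, (c k && a (k + 1) && a (k + 2) && a (k + 3)) = false) →
      (∀ k, (c k && c (k + 1) && a (k + 2) && c (k + 3)) = false) →
      (∀ i, c i = false) ∨ (∀ i, a i = false) ∨
        ∃ k, a (k + 1) = false ∧ a (k + 4) = false ∧ c (k + 2) = false ∧ c (k + 3) = false := by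
    decide
  simpa using key (fun i => hit i) (fun i => miss i) (by simpa using hcover)
    (by simpa using hpath) (by simpa using hhouse)

section Cycle

variable {B : Fin 5 → Set V}

theorem isBlowupPartition_cycleGraph_five_iff :
    IsBlowupPartition G (cycleGraph 5) B ↔
      (∀ i j, i ≠ j → Disjoint (B i) (B j)) ∧
      (∀ i, ∀ x ∈ B i, ∀ y ∈ B (i + 1), G.Adj x y) ∧
      (∀ i j, i ≠ j → j ≠ i + 1 → i ≠ j + 1 → ∀ x ∈ B i, ∀ y ∈ B j, ¬ G.Adj x y) := by
  have ne_succ : ∀ i : Fin 5, i ≠ i + 1 := by decide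
  constructor
  · intro hB
    refine ⟨fun i j hij => hB.pairwise_disjoint hij, fun i x hx y hy => ?_,
      fun i j hij hj hi x hx y hy => ?_⟩
    · exact (hB.adj_iff (ne_succ i) hx hy).2 (cycleGraph_five_adj_iff.2 (Or.inl rfl))
    · rw [hB.adj_iff hij hx hy, cycleGraph_five_adj_iff]
      tauto
  · rintro ⟨hdisj, hsucc, hfar⟩
    refine ⟨hdisj, fun i j hij x hx y hy => ?_⟩
    rw [cycleGraph_five_adj_iff]
    by_cases hj : j = i + 1
    · subst hj; exact iff_of_true (hsucc i x hx y hy) (Or.inl rfl)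
    by_cases hi : i = j + 1
    · subst hi; exact iff_of_true (hsucc j y hy x hx).symm (Or.inr rfl)
    exact iff_of_false (hfar i j hij hj hi x hx y hy) (by tauto)

namespace IsBlowupPartition

theorem isBuoy_of_maximal (hB : Maximal (IsBlowupPartition G (cycleGraph 5)) B)
    (hne : ∀ i, (B i).Nonempty) : G.IsBuoy B := by
  obtain ⟨hdisj, hsucc, hfar⟩ := isBlowupPartition_cycleGraph_five_iff.1 hB.prop
  exact ⟨hne, hdisj, hsucc, hfar, fun B' ⟨hdisj', hsucc', hfar', hle⟩ =>
    hB.eq_of_ge (isBlowupPartition_cycleGraph_five_iff.2 ⟨hdisj', hsucc', hfar'⟩) hle⟩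

theorem rotate (hB : IsBlowupPartition G (cycleGraph 5) B) (k : Fin 5) :
    IsBlowupPartition G (cycleGraph 5) fun i => B (k + i) where
  pairwise_disjoint i j hij := hB.pairwise_disjoint (by simpa using hij)
  adj_iff i j hij x hx y hy :=
    (hB.adj_iff (by simpa using hij) hx hy).trans (by simp [cycleGraph_adj])

theorem not_indFree_pathGraph (hB : IsBlowupPartition G (cycleGraph 5) B) (h4 : (B 4).Nonempty)
    {v : V} (h0 : ∃ y ∈ B 0, G.Adj v y) (h1 : ∃ y ∈ B 1, ¬ G.Adj v y)
    (h2 : ∃ y ∈ B 2, ¬ G.Adj v y) (h3 : ∃ y ∈ B 3, ¬ G.Adj v y) :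
    ¬ G.IndFree (pathGraph 5) := by
  obtain ⟨y0, hy0, hv0⟩ := h0
  obtain ⟨y1, hy1, hv1⟩ := h1
  obtain ⟨y2, hy2, hv2⟩ := h2
  obtain ⟨y3, hy3, hv3⟩ := h3
  obtain ⟨y4, hy4⟩ := h4
  have hy : ∀ i, ![y0, y1, y2, y3, y4] i ∈ B i := by intro i; fin_cases i <;> assumption
  exact not_isEmpty_iff.2 <|
    nonempty_pathGraph_embedding_of_cycle (hB.toEmbedding _ hy) hv0 hv1 hv2 hv3

theorem not_indFree_house (hB : IsBlowupPartition G (cycleGraph 5) B) (h4 : (B 4).Nonempty)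
    {v : V} (h0 : ∃ y ∈ B 0, G.Adj v y) (h1 : ∃ y ∈ B 1, G.Adj v y)
    (h2 : ∃ y ∈ B 2, ¬ G.Adj v y) (h3 : ∃ y ∈ B 3, G.Adj v y) :
    ¬ G.IndFree (pathGraph 5)ᶜ := by
  obtain ⟨y0, hy0, hv0⟩ := h0
  obtain ⟨y1, hy1, hv1⟩ := h1
  obtain ⟨y2, hy2, hv2⟩ := h2
  obtain ⟨y3, hy3, hv3⟩ := h3
  obtain ⟨y4, hy4⟩ := h4
  have hy : ∀ i, ![y0, y1, y2, y3, y4] i ∈ B i := by intro i; fin_cases i <;> assumption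
  exact not_isEmpty_iff.2 <|
    nonempty_house_embedding_of_cycle (hB.toEmbedding _ hy) hv0 hv1 hv2 hv3

theorem isModule_iUnion_of_maximal (hB : Maximal (IsBlowupPartition G (cycleGraph 5)) B)
    (hne : ∀ i, (B i).Nonempty) (hP : G.IndFree (pathGraph 5)) (hH : G.IndFree (pathGraph 5)ᶜ) :
    G.IsModule (⋃ i, B i) := by
  intro v hv
  have hcover (i : Fin 5) : (∃ y ∈ B i, G.Adj v y) ∨ ∃ y ∈ B i, ¬ G.Adj v y := by
    obtain ⟨y, hy⟩ := hne i
    by_cases h : G.Adj v y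
    exacts [Or.inl ⟨y, hy, h⟩, Or.inr ⟨y, hy, h⟩]
  rcases cycle_five_trace_cases _ _ hcover
      (fun k ⟨h0, h1, h2, h3⟩ => (hB.prop.rotate k).not_indFree_pathGraph (hne _)
        (by simpa using h0) h1 h2 h3 hP)
      (fun k ⟨h0, h1, h2, h3⟩ => (hB.prop.rotate k).not_indFree_house (hne _)
        (by simpa using h0) h1 h2 h3 hH)
    with hmiss | hhit | ⟨k, h1, h4, h2, h3⟩
  · right
    intro y hy hvy
    obtain ⟨i, hyi⟩ := Set.mem_iUnion.1 hy
    exact hmiss i ⟨y, hyi, hvy⟩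
  · left
    intro y hy
    obtain ⟨i, hyi⟩ := Set.mem_iUnion.1 hy
    by_contra hvy
    exact hhit i ⟨y, hyi, hvy⟩
  · push Not at h1 h4 h2 h3
    refine absurd (mem_iUnion_of_maximal hB (k := k) fun j hjk y hy => ?_) hv
    obtain ⟨m, rfl⟩ : ∃ m, j = k + m := ⟨j - k, by abel⟩
    rw [cycleGraph_five_adj_add_iff]
    fin_cases m
    · simp at hjk
    · simpa using h1 y hy
    · simpa using h2 y hy
    · simpa using h3 y hy
    · simpa using h4 y hy

end IsBlowupPartition

end Cycle

end SimpleGraph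

open SimpleGraph in
theorem stmt7_general {V : Type*} [Fintype V] (G : SimpleGraph V)
    (h1 : G.IndFree (pathGraph 5)) (h2 : G.IndFree (pathGraph 5)ᶜ)
    (f : cycleGraph 5 ↪g G) :
    ∃ A : Fin 5 → Set V, G.IsBuoy A ∧ Set.range f ⊆ ⋃ i, A i ∧
      ((⋃ i, A i) = Set.univ ∨
        (G.IsModule (⋃ i, A i) ∧ 1 < (⋃ i, A i).ncard ∧
          (⋃ i, A i).ncard < Fintype.card V)) := by
  obtain ⟨B, hfB, hB⟩ := Finite.exists_le_maximal (IsBlowupPartition.of_embedding f)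
  have hf (i : Fin 5) : f i ∈ B i := hfB i rfl
  have hne (i : Fin 5) : (B i).Nonempty := ⟨f i, hf i⟩
  refine ⟨B, IsBlowupPartition.isBuoy_of_maximal hB hne,
    Set.range_subset_iff.2 fun i => Set.mem_iUnion_of_mem i (hf i),
    or_iff_not_imp_left.2 fun hU => ⟨?_, ?_, ?_⟩⟩
  · exact IsBlowupPartition.isModule_iUnion_of_maximal hB hne h1 h2
  · exact (Set.one_lt_ncard_iff (Set.toFinite _)).2 ⟨f 0, f 1, Set.mem_iUnion_of_mem 0 (hf 0),
      Set.mem_iUnion_of_mem 1 (hf 1), f.injective.ne (by decide)⟩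
  · simpa using Set.ncard_lt_card hU

open SimpleGraph in
theorem stmt7 {V : Type*} [Fintype V] (G : SimpleGraph V) (hc : G.Connected)
    (h1 : G.IndFree (pathGraph 5)) (h2 : G.IndFree (pathGraph 5)ᶜ)
    (f : cycleGraph 5 ↪g G) :
    ∃ A : Fin 5 → Set V, G.IsBuoy A ∧ Set.range f ⊆ ⋃ i, A i ∧
      ((⋃ i, A i) = Set.univ ∨
        (G.IsModule (⋃ i, A i) ∧ 1 < (⋃ i, A i).ncard ∧
          (⋃ i, A i).ncard < Fintype.card V)) :=
  stmt7_general G h1 h2 f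
end

section
/- In a prime P5-free bipartite graph, the neighborhoods of any two distinct vertices in the same side of the bipartition are comparable under inclusion (they do not properly overlap). -/
/-!
A prime graph is connected, because a connected component and its complement are both
modules. In a connected `P₅`-free bipartite graph any two vertices `x ≠ y` on the same side
have a common neighbour `c`. So if `a ∈ N(x) \ N(y)` and `b ∈ N(y) \ N(x)`, then
`a x c y b` is an induced `P₅`.
-/

namespace SimpleGraph

variable {V : Type*} {G : SimpleGraph V}

theorem not_indFree_pathGraph_five {v₀ v₁ v₂ v₃ v₄ : V}
    (h₀₁ : G.Adj v₀ v₁) (h₁₂ : G.Adj v₁ v₂) (h₂₃ : G.Adj v₂ v₃) (h₃₄ : G.Adj v₃ v₄)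
    (h₀₂ : ¬G.Adj v₀ v₂) (h₀₃ : ¬G.Adj v₀ v₃) (h₀₄ : ¬G.Adj v₀ v₄)
    (h₁₃ : ¬G.Adj v₁ v₃) (h₁₄ : ¬G.Adj v₁ v₄) (h₂₄ : ¬G.Adj v₂ v₄) :
    ¬G.IndFree (pathGraph 5) := by
  have d₀₂ : v₀ ≠ v₂ := fun h => h₀₃ (h ▸ h₂₃)
  have d₀₃ : v₀ ≠ v₃ := fun h => h₀₂ (h ▸ h₂₃.symm)
  have d₀₄ : v₀ ≠ v₄ := fun h => h₀₃ (h ▸ h₃₄.symm)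
  have d₁₃ : v₁ ≠ v₃ := fun h => h₀₃ (h ▸ h₀₁)
  have d₁₄ : v₁ ≠ v₄ := fun h => h₀₄ (h ▸ h₀₁)
  have d₂₄ : v₂ ≠ v₄ := fun h => h₁₄ (h ▸ h₁₂)
  refine not_isEmpty_iff.mpr ⟨⟨⟨![v₀, v₁, v₂, v₃, v₄], fun i j hij => ?_⟩, fun {i j} => ?_⟩⟩
  · fin_cases i <;> fin_cases j <;> simp_all [h₀₁.ne, h₁₂.ne, h₂₃.ne, h₃₄.ne, eq_comm]
  · show G.Adj (![v₀, v₁, v₂, v₃, v₄] i) (![v₀, v₁, v₂, v₃, v₄] j) ↔ _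
    fin_cases i <;> fin_cases j <;> simp [pathGraph_adj, adj_comm, *]

theorem IsPrime.eq_empty_or_eq_univ_of_isModule_compl [Fintype V] (hp : G.IsPrime) {M : Set V}
    (hM : G.IsModule M) (hMc : G.IsModule Mᶜ) : M = ∅ ∨ M = Set.univ := by
  by_contra! h
  obtain ⟨a, rfl⟩ : ∃ a, M = {a} := by simpa [h.1.ne_empty, h.2] using hp.2 M hM
  obtain ⟨b, hb⟩ : ∃ b, ({a}ᶜ : Set V) = {b} := by
    simpa [Set.compl_empty_iff, h.2] using hp.2 _ hMc
  have hcard := Set.ncard_add_ncard_compl {a}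
  rw [hb, Set.ncard_singleton, Set.ncard_singleton, Nat.card_eq_fintype_card] at hcard
  have := hp.1
  omega

theorem IsPrime.preconnected [Fintype V] (hp : G.IsPrime) : G.Preconnected := by
  intro x y
  have hnoedge : ∀ z w, G.Reachable x z → ¬G.Reachable x w → ¬G.Adj z w :=
    fun z w hz hw hzw => hw (hz.trans hzw.reachable)
  have hC : G.IsModule {z | G.Reachable x z} := fun w hw => .inr fun z hz hwz =>
    hnoedge z w hz hw hwz.symm
  have hCc : G.IsModule {z | G.Reachable x z}ᶜ := fun z hz => .inr fun w hw =>
    hnoedge z w (not_not.mp hz) hw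
  rcases hp.eq_empty_or_eq_univ_of_isModule_compl hC hCc with h | h
  · exact absurd (h.subset (Reachable.refl x)) (Set.notMem_empty x)
  · exact h.symm.subset (Set.mem_univ y)

theorem mem_of_adj_of_mem {s t : Set V} (hcover : s ∪ t = Set.univ)
    (hs : ∀ x ∈ s, ∀ y ∈ s, ¬G.Adj x y) {x y : V} (hx : x ∈ s) (hxy : G.Adj x y) : y ∈ t :=
  (hcover.symm.subset (Set.mem_univ y)).resolve_left fun hy => hs x hx y hy hxy

/-- Walking from `u` to `y` two edges at a time: carrying a vertex `x` that is `u` or a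
neighbour of `u` makes the claim inductive, and a step that loses the common neighbour
yields an induced `P₅`. -/
theorem exists_adj_adj_of_walk (h5 : G.IndFree (pathGraph 5)) {s t : Set V}
    (hcover : s ∪ t = Set.univ) (hs : ∀ x ∈ s, ∀ y ∈ s, ¬G.Adj x y)
    (ht : ∀ x ∈ t, ∀ y ∈ t, ¬G.Adj x y) {u y : V} (hy : y ∈ s) (p : G.Walk u y) :
    ∀ x ∈ s, x ≠ y → (x = u ∨ G.Adj x u) → ∃ c, G.Adj x c ∧ G.Adj y c := by
  induction p with
  | nil =>
    rintro x hx hxy (rfl | hxy')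
    · exact absurd rfl hxy
    · exact absurd hxy' (hs x hx _ hy)
  | @cons u v y huv q ih =>
    rintro x hx hxy (rfl | hxu)
    · exact ih hy x hx hxy (.inr huv)
    by_cases huy : G.Adj u y
    · exact ⟨u, hxu, huy.symm⟩
    have hu : u ∈ t := mem_of_adj_of_mem hcover hs hx hxu
    have hv : v ∈ s := mem_of_adj_of_mem (Set.union_comm s t ▸ hcover) ht hu huv
    have hvy : v ≠ y := by rintro rfl; exact huy huv
    obtain ⟨c, hvc, hyc⟩ := ih hy v hv hvy (.inl rfl)
    by_cases hxc : G.Adj x c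
    · exact ⟨c, hxc, hyc⟩
    have hc : c ∈ t := mem_of_adj_of_mem hcover hs hv hvc
    exact absurd h5 <| not_indFree_pathGraph_five hxu huv hvc hyc.symm
      (hs x hx v hv) hxc (hs x hx y hy) (ht u hu c hc) huy (hs v hv y hy)

theorem neighborSet_subset_or_subset (h5 : G.IndFree (pathGraph 5)) (hG : G.Preconnected)
    {s t : Set V} (hcover : s ∪ t = Set.univ) (hs : ∀ x ∈ s, ∀ y ∈ s, ¬G.Adj x y)
    (ht : ∀ x ∈ t, ∀ y ∈ t, ¬G.Adj x y) {x y : V} (hx : x ∈ s) (hy : y ∈ s) (hxy : x ≠ y) :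
    G.neighborSet x ⊆ G.neighborSet y ∨ G.neighborSet y ⊆ G.neighborSet x := by
  by_contra! h
  obtain ⟨⟨a, hxa, hya⟩, ⟨b, hyb, hxb⟩⟩ := And.imp Set.not_subset.mp Set.not_subset.mp h
  obtain ⟨p⟩ := hG x y
  obtain ⟨c, hxc, hyc⟩ := exists_adj_adj_of_walk h5 hcover hs ht hy p x hx hxy (.inl rfl)
  have ha := mem_of_adj_of_mem hcover hs hx hxa
  have hb := mem_of_adj_of_mem hcover hs hy hyb
  have hc := mem_of_adj_of_mem hcover hs hx hxc
  exact not_indFree_pathGraph_five hxa.symm hxc hyc.symm hyb (ht a ha c hc)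
    (fun h => hya h.symm) (ht a ha b hb) (hs x hx y hy) hxb (ht c hc b hb) h5

end SimpleGraph

open SimpleGraph in
theorem stmt9_general {V : Type*} [Fintype V] (G : SimpleGraph V) (hp : G.IsPrime)
    (h5 : G.IndFree (pathGraph 5)) (B W : Set V)
    (hcover : B ∪ W = Set.univ)
    (hB : ∀ x ∈ B, ∀ y ∈ B, ¬ G.Adj x y) (hW : ∀ x ∈ W, ∀ y ∈ W, ¬ G.Adj x y) :
    ∀ x y, ((x ∈ B ∧ y ∈ B) ∨ (x ∈ W ∧ y ∈ W)) → x ≠ y →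
      G.neighborSet x ⊆ G.neighborSet y ∨ G.neighborSet y ⊆ G.neighborSet x := by
  rintro x y (⟨hx, hy⟩ | ⟨hx, hy⟩) hxy
  · exact neighborSet_subset_or_subset h5 hp.preconnected hcover hB hW hx hy hxy
  · exact neighborSet_subset_or_subset h5 hp.preconnected (Set.union_comm B W ▸ hcover) hW hB
      hx hy hxy

open SimpleGraph in
theorem stmt9 {V : Type*} [Fintype V] (G : SimpleGraph V) (hp : G.IsPrime)
    (h5 : G.IndFree (pathGraph 5)) (B W : Set V)
    (hcover : B ∪ W = Set.univ) (hdisj : Disjoint B W)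
    (hB : ∀ x ∈ B, ∀ y ∈ B, ¬ G.Adj x y) (hW : ∀ x ∈ W, ∀ y ∈ W, ¬ G.Adj x y) :
    ∀ x y, ((x ∈ B ∧ y ∈ B) ∨ (x ∈ W ∧ y ∈ W)) → x ≠ y →
      G.neighborSet x ⊆ G.neighborSet y ∨ G.neighborSet y ⊆ G.neighborSet x :=
  stmt9_general G hp h5 B W hcover hB hW
end

section
/- The half-graph on 2m vertices (B = {b_1,...,b_m}, W = {w_1,...,w_m}, b_i adjacent to w_j iff i + j ≤ m + 1) contains no induced path on 5 vertices. -/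
/-!
An induced `P₅` contains an induced `2K₂`, namely its first and last edges. The half graph has
no induced `2K₂`: its edges join some `inl i` to some `inr j` with `i + j < m`, and two edges
`inl i – inr j`, `inl k – inr l` without the edges `inl i – inr l`, `inl k – inr j` would give
`i + l + k + j ≥ 2m > i + j + k + l`.
-/

namespace SimpleGraph

variable {V : Type*}

def TwoKTwoFree (G : SimpleGraph V) : Prop :=
  ∀ ⦃x y u v : V⦄, G.Adj x y → G.Adj u v → G.Adj x u ∨ G.Adj x v ∨ G.Adj y u ∨ G.Adj y v

theorem TwoKTwoFree.indFree_pathGraph_five {G : SimpleGraph V} (hG : G.TwoKTwoFree) :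
    G.IndFree (pathGraph 5) := by
  refine ⟨fun f => ?_⟩
  have h := hG (f.map_adj_iff.mpr (by simp [pathGraph_adj] : (pathGraph 5).Adj 0 1))
    (f.map_adj_iff.mpr (by simp [pathGraph_adj] : (pathGraph 5).Adj 3 4))
  simp [f.map_adj_iff, pathGraph_adj] at h

section halfGraph

open Sum

variable {m : ℕ}

@[simp]
theorem halfGraph_adj_inl_inr (i j : Fin m) :
    (halfGraph m).Adj (inl i) (inr j) ↔ i.val + j.val < m := by
  simp [halfGraph]

@[simp]
theorem halfGraph_adj_inr_inl (i j : Fin m) :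
    (halfGraph m).Adj (inr j) (inl i) ↔ i.val + j.val < m := by
  simp [halfGraph]

@[simp]
theorem halfGraph_not_adj_inl_inl (i k : Fin m) : ¬(halfGraph m).Adj (inl i) (inl k) := by
  simp [halfGraph]

@[simp]
theorem halfGraph_not_adj_inr_inr (j l : Fin m) : ¬(halfGraph m).Adj (inr j) (inr l) := by
  simp [halfGraph]

theorem halfGraph_twoKTwoFree (m : ℕ) : (halfGraph m).TwoKTwoFree := by
  rintro (i | j) (k | l) (p | q) (r | s) <;> simp <;> omega

end halfGraph

end SimpleGraph

open SimpleGraph in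
theorem stmt12 (m : ℕ) : (halfGraph m).IndFree (pathGraph 5) :=
  (halfGraph_twoKTwoFree m).indFree_pathGraph_five
end

section
/- For every graph G and vertex v, G is prime with respect to modular decomposition if and only if G * v is prime. -/
/-!
Seidel complementation at `v` is an involution, so one direction suffices. A module `M` of `G`
with `v ∉ M` stays a module of `G * v`; if `v ∈ M`, then `{v} ∪ (V \ M)` is a module of `G * v`.
Applied to `G * v` in place of `G`, this turns every module of `G * v` into a module of `G`, and
that module is trivial only if the original one was.
-/

namespace Set

variable {α : Type*} {s : Set α} {a x : α}

lemma eq_univ_of_insert_compl_eq_singleton (ha : a ∈ s) (h : insert a sᶜ = {x}) : s = univ := by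
  refine eq_univ_of_forall fun z => by_contra fun hz => ?_
  have hz : z ∈ ({x} : Set α) := h ▸ mem_insert_of_mem a hz
  have ha' : a ∈ ({x} : Set α) := h ▸ mem_insert a sᶜ
  simp_all

lemma eq_singleton_of_insert_compl_eq_univ (ha : a ∈ s) (h : insert a sᶜ = univ) : s = {a} := by
  rw [eq_univ_iff_forall] at h
  ext z
  refine ⟨fun hz => ?_, fun hz => hz ▸ ha⟩
  simpa [hz] using h z

end Set

namespace SimpleGraph

variable {V : Type*} {G : SimpleGraph V} {M : Set V} {v x y : V}

lemma seidel_adj : (G.seidel v).Adj x y ↔ Xor (G.Adj x y)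
    ((G.Adj v x ∧ ¬ G.Adj v y ∧ y ≠ v) ∨ (G.Adj v y ∧ ¬ G.Adj v x ∧ x ≠ v)) :=
  Iff.rfl

@[simp]
lemma seidel_adj_self_left : (G.seidel v).Adj v y ↔ G.Adj v y := by
  simp [seidel_adj, xor_def]

lemma seidel_adj_of_ne (hx : x ≠ v) (hy : y ≠ v) :
    (G.seidel v).Adj x y ↔ (G.Adj x y ↔ (G.Adj v x ↔ G.Adj v y)) := by
  simp only [seidel_adj, xor_def, ne_eq, hx, hy, not_false_eq_true, and_true]
  tauto

@[simp]
lemma seidel_seidel (G : SimpleGraph V) (v : V) : (G.seidel v).seidel v = G := by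
  ext x y
  by_cases hx : x = v
  · subst hx; simp
  by_cases hy : y = v
  · subst hy; simp [adj_comm _ x]
  simp only [seidel_adj_of_ne hx hy, seidel_adj_self_left]
  tauto

lemma isModule_iff : G.IsModule M ↔ ∀ x ∉ M, ∀ y ∈ M, ∀ z ∈ M, (G.Adj x y ↔ G.Adj x z) := by
  refine ⟨fun hM x hx y hy z hz => ?_, fun hM x hx => ?_⟩
  · rcases hM x hx with h | h <;> simp [h y hy, h z hz]
  · rcases M.eq_empty_or_nonempty with rfl | ⟨y, hy⟩
    · simp
    by_cases hxy : G.Adj x y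
    · exact .inl fun z hz => (hM x hx y hy z hz).1 hxy
    · exact .inr fun z hz hxz => hxy ((hM x hx y hy z hz).2 hxz)

lemma IsModule.seidel_of_notMem (hM : G.IsModule M) (hv : v ∉ M) : (G.seidel v).IsModule M := by
  rw [isModule_iff] at hM ⊢
  intro x hx y hy z hz
  have hyv : y ≠ v := fun h => hv (h ▸ hy)
  have hzv : z ≠ v := fun h => hv (h ▸ hz)
  by_cases hxv : x = v
  · subst hxv; simpa using hM x hx y hy z hz
  rw [seidel_adj_of_ne hxv hyv, seidel_adj_of_ne hxv hzv, hM x hx y hy z hz, hM v hv y hy z hz]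

lemma IsModule.seidel_insert_compl (hM : G.IsModule M) (hv : v ∈ M) :
    (G.seidel v).IsModule (insert v Mᶜ) := by
  rw [isModule_iff] at hM ⊢
  intro x hx
  simp only [Set.mem_insert_iff, Set.mem_compl_iff, not_or, not_not] at hx
  obtain ⟨hxv, hxM⟩ := hx
  suffices h : ∀ y ∈ insert v Mᶜ, ((G.seidel v).Adj x y ↔ G.Adj v x) from
    fun y hy z hz => (h y hy).trans (h z hz).symm
  rintro y (rfl | hyM)
  · rw [adj_comm, seidel_adj_self_left]
  have hyv : y ≠ v := fun h => hyM (h ▸ hv)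
  rw [seidel_adj_of_ne hxv hyv, adj_comm G x y, adj_comm G v y, hM y hyM x hxM v hv]
  tauto

lemma IsPrime.seidel [Fintype V] (hG : G.IsPrime) (v : V) : (G.seidel v).IsPrime := by
  refine ⟨hG.1, fun M hM => ?_⟩
  by_cases hv : v ∈ M
  · rcases hG.2 _ (by simpa using hM.seidel_insert_compl hv) with h | ⟨x, h⟩ | h
    · exact absurd h (Set.insert_nonempty v Mᶜ).ne_empty
    · exact .inr <| .inr <| Set.eq_univ_of_insert_compl_eq_singleton hv h
    · exact .inr <| .inl ⟨v, Set.eq_singleton_of_insert_compl_eq_univ hv h⟩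
  · exact hG.2 M (by simpa using hM.seidel_of_notMem hv)

end SimpleGraph

open SimpleGraph in
theorem stmt14 {V : Type*} [Fintype V] (G : SimpleGraph V) (v : V) :
    G.IsPrime ↔ (G.seidel v).IsPrime :=
  ⟨fun h => h.seidel v, fun h => by simpa using h.seidel v⟩
end
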